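/- arXiv:1403.3965 — 3 statements merged into one kernel-verified Lean document; each statement's English description precedes it below -/
import Mathlib

section
/- Let v : [0,1]×[0,1] → ℝ be twice continuously differentiable on the closed square [0,1]×[0,1], satisfy the wave equation ∂_t² v(t,x) = ∂_x² v(t,x) on [0,1]×[0,1], and have initial data v(0,x) = v₀(x) and ∂_t v(0,x) = v₁(x) for x ∈ [0,1], where v₀ is continuously differentiable. Then for every t ∈ [0,1] the interface equation ∂_t v(t,0) + ∂_x v(t,0) = v₀′(t) + v₁(t) holds. -/
/-!
The Riemann invariant `vt + vx` is transported along the characteristics `t + x = const`: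
along `s ↦ (t - s, s)` its derivative is `-vtt + vtx - vtx + vxx`, which vanishes by the wave
equation. Hence its value at the boundary point `(t, 0)` equals its value at the initial point
`(0, t)`, where `vt = v₁` and `vx = v₀'`.
-/

open Set Filter Topology

/-- A classical solution of the wave equation `∂_t² v = ∂_x² v` on `[0,T] × [0,1]`:
`v` is twice continuously differentiable up to the boundary, with first partial
derivatives `vt`, `vx`, second partial derivatives `vtt`, `vxx` and mixed partial
derivative `vtx`, all continuous on the closed rectangle. -/
structure IsWaveSol (T : ℝ) (v vt vx vtt vtx vxx : ℝ → ℝ → ℝ) : Prop where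
  contv : ContinuousOn (fun p : ℝ × ℝ => v p.1 p.2) (Icc 0 T ×ˢ Icc 0 1)
  hvt : ∀ t ∈ Icc (0:ℝ) T, ∀ x ∈ Icc (0:ℝ) 1, HasDerivAt (fun τ => v τ x) (vt t x) t
  hvx : ∀ t ∈ Icc (0:ℝ) T, ∀ x ∈ Icc (0:ℝ) 1, HasDerivAt (fun y => v t y) (vx t x) x
  hvtt : ∀ t ∈ Icc (0:ℝ) T, ∀ x ∈ Icc (0:ℝ) 1, HasDerivAt (fun τ => vt τ x) (vtt t x) t
  hvtx : ∀ t ∈ Icc (0:ℝ) T, ∀ x ∈ Icc (0:ℝ) 1, HasDerivAt (fun y => vt t y) (vtx t x) x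
  hvxt : ∀ t ∈ Icc (0:ℝ) T, ∀ x ∈ Icc (0:ℝ) 1, HasDerivAt (fun τ => vx τ x) (vtx t x) t
  hvxx : ∀ t ∈ Icc (0:ℝ) T, ∀ x ∈ Icc (0:ℝ) 1, HasDerivAt (fun y => vx t y) (vxx t x) x
  contvt : ContinuousOn (fun p : ℝ × ℝ => vt p.1 p.2) (Icc 0 T ×ˢ Icc 0 1)
  contvx : ContinuousOn (fun p : ℝ × ℝ => vx p.1 p.2) (Icc 0 T ×ˢ Icc 0 1)
  contvtt : ContinuousOn (fun p : ℝ × ℝ => vtt p.1 p.2) (Icc 0 T ×ˢ Icc 0 1)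
  contvtx : ContinuousOn (fun p : ℝ × ℝ => vtx p.1 p.2) (Icc 0 T ×ˢ Icc 0 1)
  contvxx : ContinuousOn (fun p : ℝ × ℝ => vxx p.1 p.2) (Icc 0 T ×ˢ Icc 0 1)
  wave : ∀ t ∈ Icc (0:ℝ) T, ∀ x ∈ Icc (0:ℝ) 1, vtt t x = vxx t x

theorem hasFDerivAt_uncurry_of_partials {f ft fx : ℝ → ℝ → ℝ} {p : ℝ × ℝ}
    (hft : ∀ᶠ q in 𝓝 p, HasDerivAt (f · q.2) (ft q.1 q.2) q.1)
    (hfx : ∀ᶠ q in 𝓝 p, HasDerivAt (f q.1 ·) (fx q.1 q.2) q.2)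
    (cft : ContinuousAt (fun q : ℝ × ℝ => ft q.1 q.2) p)
    (cfx : ContinuousAt (fun q : ℝ × ℝ => fx q.1 q.2) p) :
    HasFDerivAt (fun q : ℝ × ℝ => f q.1 q.2)
      (ft p.1 p.2 • ContinuousLinearMap.fst ℝ ℝ ℝ + fx p.1 p.2 • ContinuousLinearMap.snd ℝ ℝ ℝ)
      p := by
  have h := (hasStrictFDerivAt_uncurry_coprod (f := f)
    (f₁ := fun x y => ft x y • ContinuousLinearMap.id ℝ ℝ)
    (f₂ := fun x y => fx x y • ContinuousLinearMap.id ℝ ℝ)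
    (hft.mono fun q hq => hq.hasFDerivAt.congr_fderiv (by ext; simp [Function.HasUncurry.uncurry]))
    (hfx.mono fun q hq => hq.hasFDerivAt.congr_fderiv (by ext; simp [Function.HasUncurry.uncurry]))
    (cft.smul continuousAt_const) (cfx.smul continuousAt_const)).hasFDerivAt
  exact h.congr_fderiv (by ext <;> simp [Function.HasUncurry.uncurry])

theorem hasDerivAt_antidiagonal_of_partials {f ft fx : ℝ → ℝ → ℝ} {t s : ℝ}
    (hft : ∀ᶠ q in 𝓝 (t - s, s), HasDerivAt (f · q.2) (ft q.1 q.2) q.1)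
    (hfx : ∀ᶠ q in 𝓝 (t - s, s), HasDerivAt (f q.1 ·) (fx q.1 q.2) q.2)
    (cft : ContinuousAt (fun q : ℝ × ℝ => ft q.1 q.2) (t - s, s))
    (cfx : ContinuousAt (fun q : ℝ × ℝ => fx q.1 q.2) (t - s, s)) :
    HasDerivAt (fun σ => f (t - σ) σ) (-ft (t - s) s + fx (t - s) s) s := by
  have hline : HasDerivAt (fun σ : ℝ => (t - σ, σ)) (-1, 1) s :=
    ((hasDerivAt_id s).const_sub t).prodMk (hasDerivAt_id s)
  exact ((hasFDerivAt_uncurry_of_partials hft hfx cft cfx).comp_hasDerivAt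
    (f := fun σ : ℝ => (t - σ, σ)) s hline).congr_deriv (by simp)

theorem eq_of_hasDerivAt_zero_Ioo {f : ℝ → ℝ} {a b : ℝ} (hab : a ≤ b)
    (hf : ContinuousOn f (Icc a b)) (hf' : ∀ x ∈ Ioo a b, HasDerivAt f 0 x) : f a = f b := by
  rcases hab.eq_or_lt with rfl | hab
  · rfl
  obtain ⟨c, -, hslope⟩ := exists_hasDerivAt_eq_slope f (fun _ => 0) hab hf hf'
  rw [eq_comm, div_eq_zero_iff, sub_eq_zero, sub_eq_zero] at hslope
  exact (hslope.resolve_right hab.ne').symm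

namespace IsWaveSol

variable {T : ℝ} {v vt vx vtt vtx vxx : ℝ → ℝ → ℝ}

theorem hasDerivAt_riemannInvariant (hv : IsWaveSol T v vt vx vtt vtx vxx) {t s : ℝ}
    (hts : t - s ∈ Ioo 0 T) (hs : s ∈ Ioo 0 1) :
    HasDerivAt (fun σ => vt (t - σ) σ + vx (t - σ) σ) 0 s := by
  have hN : Icc 0 T ×ˢ Icc 0 1 ∈ 𝓝 (t - s, s) :=
    prod_mem_nhds (Icc_mem_nhds hts.1 hts.2) (Icc_mem_nhds hs.1 hs.2)
  have hvt := hasDerivAt_antidiagonal_of_partials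
    (eventually_of_mem hN fun q hq => hv.hvtt q.1 hq.1 q.2 hq.2)
    (eventually_of_mem hN fun q hq => hv.hvtx q.1 hq.1 q.2 hq.2)
    (hv.contvtt.continuousAt hN) (hv.contvtx.continuousAt hN)
  have hvx := hasDerivAt_antidiagonal_of_partials
    (eventually_of_mem hN fun q hq => hv.hvxt q.1 hq.1 q.2 hq.2)
    (eventually_of_mem hN fun q hq => hv.hvxx q.1 hq.1 q.2 hq.2)
    (hv.contvtx.continuousAt hN) (hv.contvxx.continuousAt hN)
  refine (hvt.add hvx).congr_deriv ?_
  rw [hv.wave (t - s) (Ioo_subset_Icc_self hts) s (Ioo_subset_Icc_self hs)]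
  ring

theorem vt_add_vx_boundary_eq_initial (hv : IsWaveSol T v vt vx vtt vtx vxx) {t : ℝ}
    (ht₀ : 0 ≤ t) (htT : t ≤ T) (ht₁ : t ≤ 1) :
    vt t 0 + vx t 0 = vt 0 t + vx 0 t := by
  have hline : MapsTo (fun s : ℝ => (t - s, s)) (Icc 0 t) (Icc 0 T ×ˢ Icc 0 1) :=
    fun s hs => ⟨⟨by linarith [hs.2], by linarith [hs.1]⟩, ⟨hs.1, hs.2.trans ht₁⟩⟩
  have hcont : ContinuousOn (fun s => (t - s, s)) (Icc 0 t) := by fun_prop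
  simpa using eq_of_hasDerivAt_zero_Ioo ht₀
    ((hv.contvt.comp hcont hline).add (hv.contvx.comp hcont hline))
    fun s hs => hv.hasDerivAt_riemannInvariant ⟨by linarith [hs.2], by linarith [hs.1]⟩
      ⟨hs.1, hs.2.trans_le ht₁⟩

end IsWaveSol

theorem interface_equation_general (v vt vx vtt vtx vxx : ℝ → ℝ → ℝ) (v₀ v₀' v₁ : ℝ → ℝ)
    (hv : IsWaveSol 1 v vt vx vtt vtx vxx)
    (hv₀ : ∀ x ∈ Icc (0:ℝ) 1, v 0 x = v₀ x)
    (hv₁ : ∀ x ∈ Icc (0:ℝ) 1, vt 0 x = v₁ x)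
    (hv₀d : ∀ x ∈ Icc (0:ℝ) 1, HasDerivAt v₀ (v₀' x) x) :
    ∀ t ∈ Icc (0:ℝ) 1, vt t 0 + vx t 0 = v₀' t + v₁ t := by
  intro t ht
  -- `v 0` and `v₀` agree only on `[0, 1]`, so their derivatives are compared within it.
  have hvx₀ : vx 0 t = v₀' t :=
    (uniqueDiffOn_Icc one_pos t ht).eq_deriv _
      ((hv.hvx 0 (left_mem_Icc.2 zero_le_one) t ht).hasDerivWithinAt.congr
        (fun y hy => (hv₀ y hy).symm) (hv₀ t ht).symm)
      (hv₀d t ht).hasDerivWithinAt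
  rw [hv.vt_add_vx_boundary_eq_initial ht.1 ht.2 ht.2, hvx₀, hv₁ t ht, add_comm]

/-- For a twice continuously differentiable solution of the wave
equation on the closed unit square with initial data `v(0,·) = v₀`, `∂_t v(0,·) = v₁`
(`v₀` continuously differentiable with derivative `v₀'`), the interface equation
`∂_t v(t,0) + ∂_x v(t,0) = v₀'(t) + v₁(t)` holds for every `t ∈ [0,1]`. -/
theorem interface_equation (v vt vx vtt vtx vxx : ℝ → ℝ → ℝ) (v₀ v₀' v₁ : ℝ → ℝ)
    (hv : IsWaveSol 1 v vt vx vtt vtx vxx)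
    (hv₀ : ∀ x ∈ Icc (0:ℝ) 1, v 0 x = v₀ x)
    (hv₁ : ∀ x ∈ Icc (0:ℝ) 1, vt 0 x = v₁ x)
    (hv₀d : ∀ x ∈ Icc (0:ℝ) 1, HasDerivAt v₀ (v₀' x) x)
    (hv₀c : ContinuousOn v₀' (Icc 0 1)) :
    ∀ t ∈ Icc (0:ℝ) 1, vt t 0 + vx t 0 = v₀' t + v₁ t :=
  interface_equation_general v vt vx vtt vtx vxx v₀ v₀' v₁ hv hv₀ hv₁ hv₀d
end

section
/- Classical solutions of Problem 1 are unique: if (u,v) is a classical solution of Problem 1 (the heat–wave system) on [0,T] with zero initial data u₀ = 0, v₀ = 0, v₁ = 0, then u is identically zero on [0,T]×[−1,0] and v is identically zero on [0,T]×[0,1]. Equivalently, two classical solutions of Problem 1 with the same initial data coincide. -/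
/-!
Energy method. For the energy `E(t) = ∫₋₁⁰ u² + ∫₀¹ (v_t² + v_x²)`, integration by parts in
the heat part and the identity `v_t v_tt + v_x v_xt = ∂_x (v_t v_x)` in the wave part give
`E'(t) = 2 (u u_x)(t,0) - 2 (v_t v_x)(t,0) - 2 ∫₋₁⁰ u_x²`, the boundary terms at `x = -1` and
`x = 1` vanishing by the Dirichlet conditions. The coupling conditions make the two interface
terms cancel, so `E` is nonincreasing. Zero initial data give `E(0) = 0`, hence `E ≡ 0`; thus
`u ≡ 0` and `v_x ≡ 0`, and `v(t,1) = 0` forces `v ≡ 0`.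
-/

open Set Real MeasureTheory intervalIntegral

/-- A classical solution of the heat equation `∂_t u = ∂_x² u` on `[0,T] × [−1,0]`:
`u` is continuous on the closed rectangle, the partial derivatives `ut = ∂_t u`,
`ux = ∂_x u`, `uxx = ∂_x² u` exist and are continuous there, and `∂_t u = ∂_x² u`. -/
structure IsHeatSol (T : ℝ) (u ut ux uxx : ℝ → ℝ → ℝ) : Prop where
  contu : ContinuousOn (fun p : ℝ × ℝ => u p.1 p.2) (Icc 0 T ×ˢ Icc (-1) 0)
  hut : ∀ t ∈ Icc (0:ℝ) T, ∀ x ∈ Icc (-1:ℝ) 0, HasDerivAt (fun τ => u τ x) (ut t x) t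
  hux : ∀ t ∈ Icc (0:ℝ) T, ∀ x ∈ Icc (-1:ℝ) 0, HasDerivAt (fun y => u t y) (ux t x) x
  huxx : ∀ t ∈ Icc (0:ℝ) T, ∀ x ∈ Icc (-1:ℝ) 0, HasDerivAt (fun y => ux t y) (uxx t x) x
  contut : ContinuousOn (fun p : ℝ × ℝ => ut p.1 p.2) (Icc 0 T ×ˢ Icc (-1) 0)
  contux : ContinuousOn (fun p : ℝ × ℝ => ux p.1 p.2) (Icc 0 T ×ˢ Icc (-1) 0)
  contuxx : ContinuousOn (fun p : ℝ × ℝ => uxx p.1 p.2) (Icc 0 T ×ˢ Icc (-1) 0)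
  heat : ∀ t ∈ Icc (0:ℝ) T, ∀ x ∈ Icc (-1:ℝ) 0, ut t x = uxx t x

/-- Problem 1 (the heat–wave system) on `[0,T]` with initial data `u₀, v₀, v₁`:
the heat equation on `[0,T] × [−1,0]` and the wave equation on `[0,T] × [0,1]`,
coupled at the interface `x = 0` by `u(t,0) = ∂_t v(t,0)` (kinematic condition) and
`∂_x u(t,0) = ∂_x v(t,0)` (dynamic condition), with homogeneous boundary conditions
`u(t,−1) = v(t,1) = 0`. -/
structure Problem1 (T : ℝ) (u ut ux uxx v vt vx vtt vtx vxx : ℝ → ℝ → ℝ)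
    (u₀ v₀ v₁ : ℝ → ℝ) : Prop where
  heatSol : IsHeatSol T u ut ux uxx
  waveSol : IsWaveSol T v vt vx vtt vtx vxx
  kinematic : ∀ t ∈ Icc (0:ℝ) T, u t 0 = vt t 0
  dynamic : ∀ t ∈ Icc (0:ℝ) T, ux t 0 = vx t 0
  bdryu : ∀ t ∈ Icc (0:ℝ) T, u t (-1) = 0
  bdryv : ∀ t ∈ Icc (0:ℝ) T, v t 1 = 0
  initu : ∀ x ∈ Icc (-1:ℝ) 0, u 0 x = u₀ x
  initv : ∀ x ∈ Icc (0:ℝ) 1, v 0 x = v₀ x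
  initvt : ∀ x ∈ Icc (0:ℝ) 1, vt 0 x = v₁ x

open scoped Interval

section ParametricIntegral

variable {E : Type*} [NormedAddCommGroup E] [NormedSpace ℝ E] {F F' : ℝ → ℝ → E} {a b c d : ℝ}

theorem continuousOn_intervalIntegral_of_continuousOn_prod (hab : a ≤ b)
    (hF : ContinuousOn (fun p : ℝ × ℝ => F p.1 p.2) (Icc c d ×ˢ Icc a b)) :
    ContinuousOn (fun t => ∫ x in a..b, F t x) (Icc c d) := by
  obtain ⟨M, hM⟩ := (isCompact_Icc.prod isCompact_Icc).exists_bound_of_continuousOn hF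
  have hΙ : Ι a b ⊆ Icc a b := by rw [uIoc_of_le hab]; exact Ioc_subset_Icc_self
  intro t₀ ht₀
  apply continuousWithinAt_of_dominated_interval (bound := fun _ => M)
  · filter_upwards [self_mem_nhdsWithin] with t ht
    exact ((hF.uncurry_left (f := F) t ht).mono hΙ).aestronglyMeasurable measurableSet_uIoc
  · filter_upwards [self_mem_nhdsWithin] with t ht
    exact ae_of_all _ fun x hx => hM (t, x) ⟨ht, hΙ hx⟩
  · exact intervalIntegrable_const
  · exact ae_of_all _ fun x hx => hF.uncurry_right (f := F) x (hΙ hx) t₀ ht₀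

theorem hasDerivAt_intervalIntegral_of_continuousOn_prod (hab : a ≤ b)
    (hF : ContinuousOn (fun p : ℝ × ℝ => F p.1 p.2) (Icc c d ×ˢ Icc a b))
    (hF' : ContinuousOn (fun p : ℝ × ℝ => F' p.1 p.2) (Icc c d ×ˢ Icc a b))
    (hd : ∀ t ∈ Ioo c d, ∀ x ∈ Icc a b, HasDerivAt (fun τ => F τ x) (F' t x) t)
    {t₀ : ℝ} (ht₀ : t₀ ∈ Ioo c d) :
    HasDerivAt (fun t => ∫ x in a..b, F t x) (∫ x in a..b, F' t₀ x) t₀ := by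
  obtain ⟨M, hM⟩ := (isCompact_Icc.prod isCompact_Icc).exists_bound_of_continuousOn hF'
  have hΙ : Ι a b ⊆ Icc a b := by rw [uIoc_of_le hab]; exact Ioc_subset_Icc_self
  have hnhds : Ioo c d ∈ nhds t₀ := Ioo_mem_nhds ht₀.1 ht₀.2
  refine (hasDerivAt_integral_of_dominated_loc_of_deriv_le hnhds (bound := fun _ => M)
    ?_ ?_ ?_ ?_ intervalIntegrable_const ?_).2
  · filter_upwards [hnhds] with t ht
    exact ((hF.uncurry_left (f := F) t (Ioo_subset_Icc_self ht)).mono hΙ).aestronglyMeasurable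
      measurableSet_uIoc
  · exact (hF.uncurry_left (f := F) t₀ (Ioo_subset_Icc_self ht₀)).intervalIntegrable_of_Icc hab
  · exact ((hF'.uncurry_left (f := F') t₀ (Ioo_subset_Icc_self ht₀)).mono hΙ).aestronglyMeasurable
      measurableSet_uIoc
  · exact ae_of_all _ fun x hx t ht => hM (t, x) ⟨Ioo_subset_Icc_self ht, hΙ hx⟩
  · exact ae_of_all _ fun x hx t ht => hd t ht x (hΙ hx)

end ParametricIntegral

theorem HasDerivAt.eq_zero_of_forall_mem_Icc {E : Type*} [NormedAddCommGroup E]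
    [NormedSpace ℝ E] {f : ℝ → E} {f' : E} {a b x : ℝ} (hd : HasDerivAt f f' x) (hab : a < b)
    (hx : x ∈ Icc a b) (hf : ∀ y ∈ Icc a b, f y = 0) : f' = 0 :=
  (uniqueDiffOn_Icc hab x hx).eq_deriv _ hd.hasDerivWithinAt
    ((hasDerivWithinAt_const x _ 0).congr hf (hf x hx))

theorem eq_zero_of_integral_nonpos {f : ℝ → ℝ} {a b : ℝ} (hab : a < b)
    (hf : ContinuousOn f (Icc a b)) (hf₀ : ∀ x ∈ Icc a b, 0 ≤ f x)
    (hint : ∫ x in a..b, f x ≤ 0) : ∀ x ∈ Icc a b, f x = 0 := by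
  intro x hx
  by_contra hne
  exact (integral_pos hab hf (fun y hy => hf₀ y (Ioc_subset_Icc_self hy))
    ⟨x, hx, (hf₀ x hx).lt_of_ne' hne⟩).not_ge hint

noncomputable def heatEnergy (u : ℝ → ℝ → ℝ) (t : ℝ) : ℝ := ∫ x in (-1:ℝ)..0, u t x ^ 2

noncomputable def waveEnergy (vt vx : ℝ → ℝ → ℝ) (t : ℝ) : ℝ :=
  ∫ x in (0:ℝ)..1, (vt t x ^ 2 + vx t x ^ 2)

theorem heatEnergy_nonneg (u : ℝ → ℝ → ℝ) (t : ℝ) : 0 ≤ heatEnergy u t :=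
  integral_nonneg (by norm_num) fun _ _ => sq_nonneg _

theorem waveEnergy_nonneg (vt vx : ℝ → ℝ → ℝ) (t : ℝ) : 0 ≤ waveEnergy vt vx t :=
  integral_nonneg zero_le_one fun _ _ => add_nonneg (sq_nonneg _) (sq_nonneg _)

variable {T : ℝ}

namespace IsHeatSol

variable {u ut ux uxx : ℝ → ℝ → ℝ}

theorem integral_mul_uxx (hu : IsHeatSol T u ut ux uxx) {t : ℝ} (ht : t ∈ Icc 0 T) :
    ∫ x in (-1:ℝ)..0, u t x * uxx t x =
      u t 0 * ux t 0 - u t (-1) * ux t (-1) - ∫ x in (-1:ℝ)..0, ux t x ^ 2 := by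
  have hI : uIcc (-1:ℝ) 0 = Icc (-1) 0 := uIcc_of_le (by norm_num)
  simp only [sq]
  apply intervalIntegral.integral_mul_deriv_eq_deriv_mul
  · intro x hx; exact hu.hux t ht x (hI ▸ hx)
  · intro x hx; exact hu.huxx t ht x (hI ▸ hx)
  · exact (hu.contux.uncurry_left t ht).intervalIntegrable_of_Icc (by norm_num)
  · exact (hu.contuxx.uncurry_left t ht).intervalIntegrable_of_Icc (by norm_num)

theorem continuousOn_heatEnergy (hu : IsHeatSol T u ut ux uxx) :
    ContinuousOn (heatEnergy u) (Icc 0 T) :=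
  continuousOn_intervalIntegral_of_continuousOn_prod (F := fun t x => u t x ^ 2) (by norm_num)
    (hu.contu.pow 2)

theorem hasDerivAt_heatEnergy (hu : IsHeatSol T u ut ux uxx) {t : ℝ} (ht : t ∈ Ioo 0 T) :
    HasDerivAt (heatEnergy u)
      (2 * (u t 0 * ux t 0 - u t (-1) * ux t (-1)) - 2 * ∫ x in (-1:ℝ)..0, ux t x ^ 2) t := by
  have ht' := Ioo_subset_Icc_self ht
  have hd := hasDerivAt_intervalIntegral_of_continuousOn_prod (F := fun t x => u t x ^ 2)
    (F' := fun t x => 2 * u t x * ut t x) (by norm_num) (hu.contu.pow 2)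
    ((continuousOn_const.mul hu.contu).mul hu.contut)
    (fun s hs x hx => by simpa using (hu.hut s (Ioo_subset_Icc_self hs) x hx).fun_pow 2) ht
  refine hd.congr_deriv ?_
  rw [← mul_sub, ← hu.integral_mul_uxx ht', ← intervalIntegral.integral_const_mul]
  refine integral_congr fun x hx => ?_
  rw [uIcc_of_le (by norm_num)] at hx
  simp only [hu.heat t ht' x hx]
  ring

theorem eq_zero_of_heatEnergy_nonpos
    (hu : IsHeatSol T u ut ux uxx) {t : ℝ} (ht : t ∈ Icc 0 T) (hE : heatEnergy u t ≤ 0) :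
    ∀ x ∈ Icc (-1:ℝ) 0, u t x = 0 := fun x hx =>
  pow_eq_zero_iff two_ne_zero |>.mp <| eq_zero_of_integral_nonpos neg_one_lt_zero
    ((hu.contu.uncurry_left t ht).pow 2) (fun _ _ => sq_nonneg _) hE x hx

end IsHeatSol

namespace IsWaveSol

variable {v vt vx vtt vtx vxx : ℝ → ℝ → ℝ}

theorem integral_vtx_mul_vx_add_vt_mul_vxx (hv : IsWaveSol T v vt vx vtt vtx vxx) {t : ℝ}
    (ht : t ∈ Icc 0 T) :
    ∫ x in (0:ℝ)..1, (vtx t x * vx t x + vt t x * vxx t x) =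
      vt t 1 * vx t 1 - vt t 0 * vx t 0 := by
  have hI : uIcc (0:ℝ) 1 = Icc 0 1 := uIcc_of_le zero_le_one
  apply integral_eq_sub_of_hasDerivAt (f := fun x => vt t x * vx t x)
  · intro x hx
    exact (hv.hvtx t ht x (hI ▸ hx)).mul (hv.hvxx t ht x (hI ▸ hx))
  · exact (((hv.contvtx.uncurry_left t ht).mul (hv.contvx.uncurry_left t ht)).add
      ((hv.contvt.uncurry_left t ht).mul (hv.contvxx.uncurry_left t ht))).intervalIntegrable_of_Icc
      zero_le_one

theorem continuousOn_waveEnergy (hv : IsWaveSol T v vt vx vtt vtx vxx) :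
    ContinuousOn (waveEnergy vt vx) (Icc 0 T) :=
  continuousOn_intervalIntegral_of_continuousOn_prod
    (F := fun t x => vt t x ^ 2 + vx t x ^ 2) zero_le_one ((hv.contvt.pow 2).add (hv.contvx.pow 2))

theorem hasDerivAt_waveEnergy (hv : IsWaveSol T v vt vx vtt vtx vxx) {t : ℝ} (ht : t ∈ Ioo 0 T) :
    HasDerivAt (waveEnergy vt vx) (2 * (vt t 1 * vx t 1 - vt t 0 * vx t 0)) t := by
  have ht' := Ioo_subset_Icc_self ht
  have hd := hasDerivAt_intervalIntegral_of_continuousOn_prod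
    (F := fun t x => vt t x ^ 2 + vx t x ^ 2)
    (F' := fun t x => 2 * vt t x * vtt t x + 2 * vx t x * vtx t x) zero_le_one
    ((hv.contvt.pow 2).add (hv.contvx.pow 2))
    (((continuousOn_const.mul hv.contvt).mul hv.contvtt).add
      ((continuousOn_const.mul hv.contvx).mul hv.contvtx))
    (fun s hs x hx => by
      simpa using ((hv.hvtt s (Ioo_subset_Icc_self hs) x hx).fun_pow 2).fun_add
        ((hv.hvxt s (Ioo_subset_Icc_self hs) x hx).fun_pow 2)) ht
  refine hd.congr_deriv ?_
  rw [← hv.integral_vtx_mul_vx_add_vt_mul_vxx ht', ← intervalIntegral.integral_const_mul]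
  refine integral_congr fun x hx => ?_
  rw [uIcc_of_le zero_le_one] at hx
  simp only [hv.wave t ht' x hx]
  ring

theorem eq_zero_of_waveEnergy_nonpos
    (hv : IsWaveSol T v vt vx vtt vtx vxx) {t : ℝ} (ht : t ∈ Icc 0 T) (hv₁ : v t 1 = 0)
    (hE : waveEnergy vt vx t ≤ 0) : ∀ x ∈ Icc (0:ℝ) 1, v t x = 0 := by
  have hvx : ∀ x ∈ Icc (0:ℝ) 1, vx t x = 0 := fun x hx => by
    have h := eq_zero_of_integral_nonpos zero_lt_one
      (((hv.contvt.uncurry_left t ht).pow 2).add ((hv.contvx.uncurry_left t ht).pow 2))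
      (fun _ _ => add_nonneg (sq_nonneg _) (sq_nonneg _)) hE x hx
    exact pow_eq_zero_iff two_ne_zero |>.mp
      ((add_eq_zero_iff_of_nonneg (sq_nonneg _) (sq_nonneg _)).mp h).2
  have hconst := constant_of_has_deriv_right_zero (hv.contv.uncurry_left t ht) fun x hx =>
    hvx x (Ico_subset_Icc_self hx) ▸ (hv.hvx t ht x (Ico_subset_Icc_self hx)).hasDerivWithinAt
  intro x hx
  rw [hconst x hx, ← hconst 1 ⟨zero_le_one, le_rfl⟩, hv₁]

end IsWaveSol

namespace Problem1

variable {u ut ux uxx v vt vx vtt vtx vxx : ℝ → ℝ → ℝ} {u₀ v₀ v₁ : ℝ → ℝ}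

theorem antitoneOn_energy (hP : Problem1 T u ut ux uxx v vt vx vtt vtx vxx u₀ v₀ v₁) :
    AntitoneOn (fun t => heatEnergy u t + waveEnergy vt vx t) (Icc 0 T) := by
  have hderiv : ∀ t ∈ Ioo 0 T, HasDerivAt (fun t => heatEnergy u t + waveEnergy vt vx t)
      (-2 * ∫ x in (-1:ℝ)..0, ux t x ^ 2) t := by
    intro t ht
    have ht' := Ioo_subset_Icc_self ht
    have hvt1 : vt t 1 = 0 :=
      (hP.waveSol.hvt t ht' 1 ⟨zero_le_one, le_rfl⟩).eq_zero_of_forall_mem_Icc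
        (ht.1.trans ht.2) ht' hP.bdryv
    refine ((hP.heatSol.hasDerivAt_heatEnergy ht).add
      (hP.waveSol.hasDerivAt_waveEnergy ht)).congr_deriv ?_
    rw [hP.kinematic t ht', hP.dynamic t ht', hP.bdryu t ht', hvt1]
    ring
  refine antitoneOn_of_hasDerivWithinAt_nonpos (convex_Icc 0 T)
    (hP.heatSol.continuousOn_heatEnergy.add hP.waveSol.continuousOn_waveEnergy)
    (fun t ht => (hderiv t (by rwa [interior_Icc] at ht)).hasDerivWithinAt) fun t _ => ?_
  have := integral_nonneg (μ := volume) (show (-1:ℝ) ≤ 0 by norm_num)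
    fun x _ => sq_nonneg (ux t x)
  linarith

theorem energy_zero_of_zero_data (hT : 0 ≤ T)
    (hP : Problem1 T u ut ux uxx v vt vx vtt vtx vxx (fun _ => 0) (fun _ => 0) (fun _ => 0)) :
    heatEnergy u 0 + waveEnergy vt vx 0 = 0 := by
  have h0 : (0:ℝ) ∈ Icc 0 T := ⟨le_rfl, hT⟩
  have hvx : ∀ x ∈ Icc (0:ℝ) 1, vx 0 x = 0 := fun x hx =>
    (hP.waveSol.hvx 0 h0 x hx).eq_zero_of_forall_mem_Icc zero_lt_one hx hP.initv
  have hheat : heatEnergy u 0 = 0 := by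
    refine (integral_congr fun x hx => ?_).trans integral_zero
    rw [uIcc_of_le (by norm_num)] at hx
    simp [hP.initu x hx]
  have hwave : waveEnergy vt vx 0 = 0 := by
    refine (integral_congr fun x hx => ?_).trans integral_zero
    rw [uIcc_of_le zero_le_one] at hx
    simp [hP.initvt x hx, hvx x hx]
  rw [hheat, hwave, add_zero]

end Problem1

/-- Uniqueness for Problem 1: a classical solution `(u,v)` of the
heat–wave system on `[0,T]` with zero initial data vanishes identically. -/
theorem problem1_uniqueness (T : ℝ) (hT : 0 ≤ T)
    (u ut ux uxx v vt vx vtt vtx vxx : ℝ → ℝ → ℝ)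
    (hP : Problem1 T u ut ux uxx v vt vx vtt vtx vxx
      (fun _ => 0) (fun _ => 0) (fun _ => 0)) :
    (∀ t ∈ Icc (0:ℝ) T, ∀ x ∈ Icc (-1:ℝ) 0, u t x = 0) ∧
    (∀ t ∈ Icc (0:ℝ) T, ∀ x ∈ Icc (0:ℝ) 1, v t x = 0) := by
  have hE : ∀ t ∈ Icc (0:ℝ) T, heatEnergy u t + waveEnergy vt vx t ≤ 0 := fun t ht =>
    Problem1.energy_zero_of_zero_data hT hP ▸ hP.antitoneOn_energy ⟨le_rfl, hT⟩ ht ht.1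
  refine ⟨fun t ht => hP.heatSol.eq_zero_of_heatEnergy_nonpos ht ?_,
    fun t ht => hP.waveSol.eq_zero_of_waveEnergy_nonpos ht (hP.bdryv t ht) ?_⟩
  · linarith [hE t ht, waveEnergy_nonneg vt vx t]
  · linarith [hE t ht, heatEnergy_nonneg u t]
end

section
/- Let (u,v,h) be a classical solution of Problem 2 (the heat–wave system coupled through a point mass) on [0,T] with initial data u₀, v₀, v₁, where v₀ is continuously differentiable. Then for every t ∈ [0,T] the coupled energy identity (1/2)∫_{−1}^{0} u(t,x)² dx + (1/2) h′(t)² + (1/2)∫_0^1 ((∂_t v(t,x))² + (∂_x v(t,x))²) dx + ∫_0^t ∫_{−1}^{0} (∂_x u(s,x))² dx ds = (1/2)∫_{−1}^{0} u₀(x)² dx + (1/2)∫_0^1 (v₁(x)² + v₀′(x)²) dx holds, where the term (1/2)h′(t)² is the kinetic energy of the interface point mass. -/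
/-!
Multiply the heat equation by `u`, the wave equation by `∂ₜv` and Newton's law by `h'`, and
integrate by parts in space. The Dirichlet conditions kill the boundary terms at `x = -1` and
`x = 1`, while the coupling conditions make the interface terms `u ∂ₓu` (heat side), `-∂ₜv ∂ₓv`
(wave side) and the power `h' h''` of the point mass cancel. Integrating in time, with Fubini for
the continuous integrands on the rectangles, gives the energy identity.
-/

open Set Real MeasureTheory intervalIntegral

/-- Problem 2 (the heat–wave system coupled through a point mass) on `[0,T]` with
initial data `u₀, v₀, v₁`: the heat equation on `[0,T] × [−1,0]` and the wave
equation on `[0,T] × [0,1]`, coupled at the interface `x = 0` through a point mass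
with displacement `h` (a twice continuously differentiable function with first and
second derivatives `h'` and `h''`), via `u(t,0) = h'(t) = ∂_t v(t,0)` and Newton's
law `h''(t) = ∂_x v(t,0) − ∂_x u(t,0)`, with homogeneous boundary conditions
`u(t,−1) = v(t,1) = 0` and `h(0) = h'(0) = 0`. -/
structure Problem2 (T : ℝ) (u ut ux uxx v vt vx vtt vtx vxx : ℝ → ℝ → ℝ)
    (h h' h'' : ℝ → ℝ) (u₀ v₀ v₁ : ℝ → ℝ) : Prop where
  heatSol : IsHeatSol T u ut ux uxx
  waveSol : IsWaveSol T v vt vx vtt vtx vxx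
  hd : ∀ t ∈ Icc (0:ℝ) T, HasDerivAt h (h' t) t
  hdd : ∀ t ∈ Icc (0:ℝ) T, HasDerivAt h' (h'' t) t
  conth'' : ContinuousOn h'' (Icc 0 T)
  kinematic1 : ∀ t ∈ Icc (0:ℝ) T, u t 0 = h' t
  kinematic2 : ∀ t ∈ Icc (0:ℝ) T, h' t = vt t 0
  newton : ∀ t ∈ Icc (0:ℝ) T, h'' t = vx t 0 - ux t 0
  bdryu : ∀ t ∈ Icc (0:ℝ) T, u t (-1) = 0
  bdryv : ∀ t ∈ Icc (0:ℝ) T, v t 1 = 0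
  initu : ∀ x ∈ Icc (-1:ℝ) 0, u 0 x = u₀ x
  inith : h 0 = 0
  inith' : h' 0 = 0
  initv : ∀ x ∈ Icc (0:ℝ) 1, v 0 x = v₀ x
  initvt : ∀ x ∈ Icc (0:ℝ) 1, vt 0 x = v₁ x

open scoped Topology

section RectangleCalculus

variable {F F' : ℝ → ℝ → ℝ} {t₀ t₁ a b : ℝ}

theorem integrableOn_uIoc_prod_of_continuousOn (ht : t₀ ≤ t₁) (hab : a ≤ b)
    (hF : ContinuousOn (fun p : ℝ × ℝ => F p.1 p.2) (Icc t₀ t₁ ×ˢ Icc a b)) :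
    IntegrableOn (Function.uncurry F) (uIoc t₀ t₁ ×ˢ uIoc a b) := by
  rw [uIoc_of_le ht, uIoc_of_le hab]
  exact (hF.integrableOn_compact (isCompact_Icc.prod isCompact_Icc)).mono_set
    (prod_mono Ioc_subset_Icc_self Ioc_subset_Icc_self)

theorem intervalIntegral_swap_of_continuousOn (ht : t₀ ≤ t₁) (hab : a ≤ b)
    (hF : ContinuousOn (fun p : ℝ × ℝ => F p.1 p.2) (Icc t₀ t₁ ×ˢ Icc a b)) :
    ∫ x in a..b, ∫ s in t₀..t₁, F s x = ∫ s in t₀..t₁, ∫ x in a..b, F s x :=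
  (intervalIntegral_intervalIntegral_swap
    (integrableOn_uIoc_prod_of_continuousOn ht hab hF)).symm

theorem intervalIntegrable_intervalIntegral_of_continuousOn (ht : t₀ ≤ t₁) (hab : a ≤ b)
    (hF : ContinuousOn (fun p : ℝ × ℝ => F p.1 p.2) (Icc t₀ t₁ ×ˢ Icc a b)) :
    IntervalIntegrable (fun s => ∫ x in a..b, F s x) volume t₀ t₁ := by
  have hint := integrableOn_uIoc_prod_of_continuousOn ht hab hF
  rw [uIoc_of_le ht, uIoc_of_le hab, IntegrableOn, Measure.volume_eq_prod,
    ← Measure.prod_restrict] at hint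
  rw [intervalIntegrable_iff_integrableOn_Ioc_of_le ht]
  simp_rw [intervalIntegral.integral_of_le hab]
  exact hint.integral_prod_left

/-- The fundamental theorem of calculus in time at each `x`, integrated over `[a, b]`, followed
by Fubini. -/
theorem integral_sub_integral_eq_integral_integral_of_hasDerivAt (ht : t₀ ≤ t₁) (hab : a ≤ b)
    (hF : ContinuousOn (fun p : ℝ × ℝ => F p.1 p.2) (Icc t₀ t₁ ×ˢ Icc a b))
    (hF' : ContinuousOn (fun p : ℝ × ℝ => F' p.1 p.2) (Icc t₀ t₁ ×ˢ Icc a b))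
    (hderiv : ∀ s ∈ Icc t₀ t₁, ∀ x ∈ Icc a b, HasDerivAt (F · x) (F' s x) s) :
    (∫ x in a..b, F t₁ x) - ∫ x in a..b, F t₀ x = ∫ s in t₀..t₁, ∫ x in a..b, F' s x := by
  have slice_integrable : ∀ s ∈ Icc t₀ t₁, IntervalIntegrable (F s) volume a b :=
    fun s hs => (hF.uncurry_left s hs).intervalIntegrable_of_Icc hab
  rw [← intervalIntegral.integral_sub (slice_integrable t₁ (right_mem_Icc.2 ht))
    (slice_integrable t₀ (left_mem_Icc.2 ht)), ← intervalIntegral_swap_of_continuousOn ht hab hF']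
  refine intervalIntegral.integral_congr fun x hx => ?_
  rw [uIcc_of_le hab] at hx
  refine (intervalIntegral.integral_eq_sub_of_hasDerivAt (f := (F · x)) (fun s hs => ?_) ?_).symm
  · exact hderiv s (by rwa [uIcc_of_le ht] at hs) x hx
  · exact (hF'.uncurry_right x hx).intervalIntegrable_of_Icc ht

end RectangleCalculus

theorem HasDerivAt.eq_of_eqOn {f g : ℝ → ℝ} {f' g' x : ℝ} {s : Set ℝ}
    (hf : HasDerivAt f f' x) (hg : HasDerivAt g g' x) (hs : s ∈ 𝓝 x) (hfg : EqOn f g s) :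
    f' = g' :=
  hf.unique (hg.congr_of_eventuallyEq (Filter.mem_of_superset hs fun _ hy => hfg hy))

theorem half_sq_eq_add_integral_mul_deriv {f f' : ℝ → ℝ} {a b : ℝ} (hab : a ≤ b)
    (hf : ∀ s ∈ Icc a b, HasDerivAt f (f' s) s) (hf' : ContinuousOn f' (Icc a b)) :
    1 / 2 * f b ^ 2 = 1 / 2 * f a ^ 2 + ∫ s in a..b, f s * f' s := by
  have hfc : ContinuousOn f (Icc a b) := fun s hs => (hf s hs).continuousAt.continuousWithinAt
  rw [intervalIntegral.integral_eq_sub_of_hasDerivAt (f := fun s => 1 / 2 * f s ^ 2)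
    (f' := fun s => f s * f' s)
    (fun s hs => ?_) ((hfc.mul hf').intervalIntegrable_of_Icc hab)]
  · ring
  · rw [uIcc_of_le hab] at hs
    exact (((hf s hs).pow 2).const_mul (1 / 2)).congr_deriv (by ring)

namespace IsHeatSol

variable {T : ℝ} {u ut ux uxx : ℝ → ℝ → ℝ}

theorem integral_mul_time_deriv (hu : IsHeatSol T u ut ux uxx) {s : ℝ} (hs : s ∈ Icc 0 T) :
    ∫ x in (-1:ℝ)..0, u s x * ut s x
      = u s 0 * ux s 0 - u s (-1) * ux s (-1) - ∫ x in (-1:ℝ)..0, ux s x ^ 2 := by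
  have hI : uIcc (-1:ℝ) 0 = Icc (-1) 0 := uIcc_of_le (by norm_num)
  have heat : ∫ x in (-1:ℝ)..0, u s x * ut s x = ∫ x in (-1:ℝ)..0, u s x * uxx s x :=
    intervalIntegral.integral_congr fun x hx => by
      rw [hI] at hx
      simp only [hu.heat s hs x hx]
  simp only [heat, sq]
  exact intervalIntegral.integral_mul_deriv_eq_deriv_mul
    (fun x hx => hu.hux s hs x (hI ▸ hx)) (fun x hx => hu.huxx s hs x (hI ▸ hx))
    ((hu.contux.uncurry_left s hs).intervalIntegrable_of_Icc (by norm_num))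
    ((hu.contuxx.uncurry_left s hs).intervalIntegrable_of_Icc (by norm_num))

theorem energy_identity (hu : IsHeatSol T u ut ux uxx)
    (hbd : ∀ s ∈ Icc (0:ℝ) T, u s (-1) = 0) {t : ℝ} (ht : t ∈ Icc 0 T) :
    1 / 2 * (∫ x in (-1:ℝ)..0, u t x ^ 2) + ∫ s in (0:ℝ)..t, ∫ x in (-1:ℝ)..0, ux s x ^ 2
      = 1 / 2 * (∫ x in (-1:ℝ)..0, u 0 x ^ 2) + ∫ s in (0:ℝ)..t, u s 0 * ux s 0 := by
  have hsub : Icc 0 t ⊆ Icc 0 T := Icc_subset_Icc_right ht.2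
  have hR : Icc 0 t ×ˢ Icc (-1) 0 ⊆ Icc 0 T ×ˢ Icc (-1:ℝ) 0 := prod_mono hsub subset_rfl
  have balance := integral_sub_integral_eq_integral_integral_of_hasDerivAt
    (F := fun s x => 1 / 2 * u s x ^ 2) (F' := fun s x => u s x * ut s x) ht.1 (by norm_num)
    ((continuousOn_const.mul (hu.contu.pow 2)).mono hR) ((hu.contu.mul hu.contut).mono hR)
    fun s hs x hx => (((hu.hut s (hsub hs) x hx).pow 2).const_mul (1 / 2)).congr_deriv (by ring)
  have flux : ∫ s in (0:ℝ)..t, ∫ x in (-1:ℝ)..0, u s x * ut s x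
      = ∫ s in (0:ℝ)..t, (u s 0 * ux s 0 - ∫ x in (-1:ℝ)..0, ux s x ^ 2) :=
    intervalIntegral.integral_congr fun s hs => by
      rw [uIcc_of_le ht.1] at hs
      simp only [hu.integral_mul_time_deriv (hsub hs), hbd s (hsub hs), zero_mul, sub_zero]
  have flux_integrable : IntervalIntegrable (fun s => u s 0 * ux s 0) volume 0 t :=
    ((hu.contu.uncurry_right 0 (by norm_num)).mul
      (hu.contux.uncurry_right 0 (by norm_num))).mono hsub |>.intervalIntegrable_of_Icc ht.1
  have dissipation_integrable :
      IntervalIntegrable (fun s => ∫ x in (-1:ℝ)..0, ux s x ^ 2) volume 0 t :=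
    intervalIntegrable_intervalIntegral_of_continuousOn (F := fun s x => ux s x ^ 2) ht.1
      (by norm_num) ((hu.contux.pow 2).mono hR)
  rw [flux, intervalIntegral.integral_sub flux_integrable dissipation_integrable,
    intervalIntegral.integral_const_mul, intervalIntegral.integral_const_mul] at balance
  linarith

end IsHeatSol

namespace IsWaveSol

variable {T : ℝ} {v vt vx vtt vtx vxx : ℝ → ℝ → ℝ}

theorem integral_energy_flux (hv : IsWaveSol T v vt vx vtt vtx vxx) {s : ℝ} (hs : s ∈ Icc 0 T) :
    ∫ x in (0:ℝ)..1, (vt s x * vtt s x + vx s x * vtx s x)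
      = vt s 1 * vx s 1 - vt s 0 * vx s 0 := by
  have hI : uIcc (0:ℝ) 1 = Icc 0 1 := uIcc_of_le zero_le_one
  have wave : ∫ x in (0:ℝ)..1, (vt s x * vtt s x + vx s x * vtx s x)
      = ∫ x in (0:ℝ)..1, (vtx s x * vx s x + vt s x * vxx s x) :=
    intervalIntegral.integral_congr fun x hx => by
      rw [hI] at hx
      simp only [hv.wave s hs x hx]
      ring
  rw [wave]
  exact intervalIntegral.integral_deriv_mul_eq_sub
    (fun x hx => hv.hvtx s hs x (hI ▸ hx)) (fun x hx => hv.hvxx s hs x (hI ▸ hx))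
    ((hv.contvtx.uncurry_left s hs).intervalIntegrable_of_Icc zero_le_one)
    ((hv.contvxx.uncurry_left s hs).intervalIntegrable_of_Icc zero_le_one)

theorem time_deriv_eq_zero_of_dirichlet (hv : IsWaveSol T v vt vx vtt vtx vxx)
    (hbd : ∀ s ∈ Icc (0:ℝ) T, v s 1 = 0) {s : ℝ} (hs : s ∈ Ioo 0 T) : vt s 1 = 0 :=
  (hv.hvt s (Ioo_subset_Icc_self hs) 1 (by norm_num)).eq_of_eqOn (hasDerivAt_const s 0)
    (Icc_mem_nhds hs.1 hs.2) hbd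

theorem energy_identity (hv : IsWaveSol T v vt vx vtt vtx vxx)
    (hbd : ∀ s ∈ Icc (0:ℝ) T, v s 1 = 0) {t : ℝ} (ht : t ∈ Icc 0 T) :
    1 / 2 * (∫ x in (0:ℝ)..1, (vt t x ^ 2 + vx t x ^ 2)) + ∫ s in (0:ℝ)..t, vt s 0 * vx s 0
      = 1 / 2 * ∫ x in (0:ℝ)..1, (vt 0 x ^ 2 + vx 0 x ^ 2) := by
  have hsub : Icc 0 t ⊆ Icc 0 T := Icc_subset_Icc_right ht.2
  have hR : Icc 0 t ×ˢ Icc 0 1 ⊆ Icc 0 T ×ˢ Icc (0:ℝ) 1 := prod_mono hsub subset_rfl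
  have balance := integral_sub_integral_eq_integral_integral_of_hasDerivAt
    (F := fun s x => 1 / 2 * (vt s x ^ 2 + vx s x ^ 2))
    (F' := fun s x => vt s x * vtt s x + vx s x * vtx s x) ht.1 zero_le_one
    ((continuousOn_const.mul ((hv.contvt.pow 2).add (hv.contvx.pow 2))).mono hR)
    (((hv.contvt.mul hv.contvtt).add (hv.contvx.mul hv.contvtx)).mono hR)
    fun s hs x hx => ((((hv.hvtt s (hsub hs) x hx).pow 2).add
      ((hv.hvxt s (hsub hs) x hx).pow 2)).const_mul (1 / 2)).congr_deriv (by ring)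
  have flux : ∫ s in (0:ℝ)..t, ∫ x in (0:ℝ)..1, (vt s x * vtt s x + vx s x * vtx s x)
      = ∫ s in (0:ℝ)..t, -(vt s 0 * vx s 0) :=
    intervalIntegral.integral_congr_Ioo_of_le ht.1 fun s hs => by
      -- `v(·, 1)` vanishes only on `[0, T]`, so its time derivative is known at interior times
      have hsT : s ∈ Ioo 0 T := ⟨hs.1, hs.2.trans_le ht.2⟩
      simp only [hv.integral_energy_flux (Ioo_subset_Icc_self hsT),
        hv.time_deriv_eq_zero_of_dirichlet hbd hsT, zero_mul, zero_sub]
  rw [flux, intervalIntegral.integral_neg, intervalIntegral.integral_const_mul,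
    intervalIntegral.integral_const_mul] at balance
  linarith

end IsWaveSol

namespace Problem2

variable {T : ℝ} {u ut ux uxx v vt vx vtt vtx vxx : ℝ → ℝ → ℝ} {h h' h'' u₀ v₀ v₁ : ℝ → ℝ}

theorem integral_interface_power
    (hP : Problem2 T u ut ux uxx v vt vx vtt vtx vxx h h' h'' u₀ v₀ v₁)
    {t : ℝ} (ht : t ∈ Icc 0 T) :
    ∫ s in (0:ℝ)..t, h' s * h'' s
      = (∫ s in (0:ℝ)..t, vt s 0 * vx s 0) - ∫ s in (0:ℝ)..t, u s 0 * ux s 0 := by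
  have hsub : Icc 0 t ⊆ Icc 0 T := Icc_subset_Icc_right ht.2
  have wave_flux : IntervalIntegrable (fun s => vt s 0 * vx s 0) volume 0 t :=
    ((hP.waveSol.contvt.uncurry_right 0 (by norm_num)).mul
      (hP.waveSol.contvx.uncurry_right 0 (by norm_num))).mono hsub |>.intervalIntegrable_of_Icc ht.1
  have heat_flux : IntervalIntegrable (fun s => u s 0 * ux s 0) volume 0 t :=
    ((hP.heatSol.contu.uncurry_right 0 (by norm_num)).mul
      (hP.heatSol.contux.uncurry_right 0 (by norm_num))).mono hsub |>.intervalIntegrable_of_Icc ht.1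
  rw [← intervalIntegral.integral_sub wave_flux heat_flux]
  refine intervalIntegral.integral_congr fun s hs => ?_
  rw [uIcc_of_le ht.1] at hs
  simp only [hP.newton s (hsub hs), hP.kinematic1 s (hsub hs), ← hP.kinematic2 s (hsub hs)]
  ring

end Problem2

theorem problem2_energy_identity_general (T : ℝ)
    (u ut ux uxx v vt vx vtt vtx vxx : ℝ → ℝ → ℝ) (h h' h'' : ℝ → ℝ)
    (u₀ v₀ v₀' v₁ : ℝ → ℝ)
    (hP : Problem2 T u ut ux uxx v vt vx vtt vtx vxx h h' h'' u₀ v₀ v₁)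
    (hv₀d : ∀ x ∈ Icc (0:ℝ) 1, HasDerivAt v₀ (v₀' x) x) :
    ∀ t ∈ Icc (0:ℝ) T,
      (1 / 2) * (∫ x in (-1:ℝ)..0, (u t x) ^ 2)
        + (1 / 2) * (h' t) ^ 2
        + (1 / 2) * (∫ x in (0:ℝ)..1, ((vt t x) ^ 2 + (vx t x) ^ 2))
        + (∫ s in (0:ℝ)..t, ∫ x in (-1:ℝ)..0, (ux s x) ^ 2)
      = (1 / 2) * (∫ x in (-1:ℝ)..0, (u₀ x) ^ 2)
        + (1 / 2) * (∫ x in (0:ℝ)..1, ((v₁ x) ^ 2 + (v₀' x) ^ 2)) := by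
  intro t ht
  have heat := hP.heatSol.energy_identity hP.bdryu ht
  have wave := hP.waveSol.energy_identity hP.bdryv ht
  have hsub : Icc 0 t ⊆ Icc 0 T := Icc_subset_Icc_right ht.2
  have mass := half_sq_eq_add_integral_mul_deriv ht.1 (fun s hs => hP.hdd s (hsub hs))
    (hP.conth''.mono hsub)
  have init_u : ∫ x in (-1:ℝ)..0, u 0 x ^ 2 = ∫ x in (-1:ℝ)..0, u₀ x ^ 2 :=
    intervalIntegral.integral_congr fun x hx => by
      rw [uIcc_of_le (by norm_num)] at hx
      simp only [hP.initu x hx]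
  have init_v : ∫ x in (0:ℝ)..1, (vt 0 x ^ 2 + vx 0 x ^ 2)
      = ∫ x in (0:ℝ)..1, (v₁ x ^ 2 + v₀' x ^ 2) :=
    intervalIntegral.integral_congr_Ioo_of_le zero_le_one fun x hx => by
      have hx' := Ioo_subset_Icc_self hx
      have slope : vx 0 x = v₀' x :=
        (hP.waveSol.hvx 0 (hsub (left_mem_Icc.2 ht.1)) x hx').eq_of_eqOn (hv₀d x hx')
          (Icc_mem_nhds hx.1 hx.2) hP.initv
      simp only [hP.initvt x hx', slope]
  rw [hP.inith', hP.integral_interface_power ht] at mass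
  rw [← init_u, ← init_v]
  linarith

/-- Coupled energy identity for a classical solution `(u,v,h)` of
Problem 2 (the heat–wave system coupled through a point mass) on `[0,T]` with initial
data `u₀, v₀, v₁`, `v₀` continuously differentiable with derivative `v₀'`:
`(1/2)∫_{−1}^0 u(t)² + (1/2) h'(t)² + (1/2)∫_0^1 ((∂_t v(t))² + (∂_x v(t))²)
 + ∫_0^t ∫_{−1}^0 (∂_x u)² = (1/2)∫_{−1}^0 u₀² + (1/2)∫_0^1 (v₁² + v₀'²)`,
where `(1/2) h'(t)²` is the kinetic energy of the interface point mass. -/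
theorem problem2_energy_identity (T : ℝ) (hT : 0 ≤ T)
    (u ut ux uxx v vt vx vtt vtx vxx : ℝ → ℝ → ℝ) (h h' h'' : ℝ → ℝ)
    (u₀ v₀ v₀' v₁ : ℝ → ℝ)
    (hP : Problem2 T u ut ux uxx v vt vx vtt vtx vxx h h' h'' u₀ v₀ v₁)
    (hv₀d : ∀ x ∈ Icc (0:ℝ) 1, HasDerivAt v₀ (v₀' x) x)
    (hv₀c : ContinuousOn v₀' (Icc 0 1)) :
    ∀ t ∈ Icc (0:ℝ) T,
      (1 / 2) * (∫ x in (-1:ℝ)..0, (u t x) ^ 2)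
        + (1 / 2) * (h' t) ^ 2
        + (1 / 2) * (∫ x in (0:ℝ)..1, ((vt t x) ^ 2 + (vx t x) ^ 2))
        + (∫ s in (0:ℝ)..t, ∫ x in (-1:ℝ)..0, (ux s x) ^ 2)
      = (1 / 2) * (∫ x in (-1:ℝ)..0, (u₀ x) ^ 2)
        + (1 / 2) * (∫ x in (0:ℝ)..1, ((v₁ x) ^ 2 + (v₀' x) ^ 2)) :=
  problem2_energy_identity_general T u ut ux uxx v vt vx vtt vtx vxx h h' h'' u₀ v₀ v₀' v₁ hP hv₀d
end
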